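/- arXiv:1303.0137 — 5 statements merged into one kernel-verified Lean document; each statement's English description precedes it below -/
import Mathlib

section
/- Let A, B be real numbers with -1 ≤ B < A ≤ 1 and let z be a complex number with |z| < 1. Then Re((1 - A B z^2)/((1 + A z)(1 + B z))) > 0. -/
/-! Partial fractions give
`(1 - A B z²) / ((1 + A z)(1 + B z)) = 1 / (1 + A z) + 1 / (1 + B z) - 1`,
and `1 / (1 + w)` has real part greater than `1 / 2` whenever `|w| < 1`, since
`2 (1 + Re w) - |1 + w|² = 1 - |w|² > 0`. -/

open Complex

theorem one_sub_mul_div_eq_inv_add_inv_sub_one {K : Type*} [Field K] {u v : K}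
    (hu : 1 + u ≠ 0) (hv : 1 + v ≠ 0) :
    (1 - u * v) / ((1 + u) * (1 + v)) = (1 + u)⁻¹ + (1 + v)⁻¹ - 1 := by
  field_simp
  ring

theorem one_add_ne_zero_of_norm_lt_one {w : ℂ} (hw : ‖w‖ < 1) : 1 + w ≠ 0 := by
  intro h
  rw [eq_neg_of_add_eq_zero_right h, norm_neg, norm_one] at hw
  exact lt_irrefl 1 hw

theorem one_half_lt_re_inv_one_add {w : ℂ} (hw : ‖w‖ < 1) : 1 / 2 < (1 + w)⁻¹.re := by
  have hnormSq : normSq w < 1 := by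
    rw [normSq_eq_norm_sq]
    nlinarith [norm_nonneg w]
  have hexpand : normSq (1 + w) = 1 + 2 * w.re + normSq w := by
    simp only [normSq_apply, add_re, add_im, one_re, one_im]
    ring
  rw [inv_re, lt_div_iff₀ (normSq_pos.mpr (one_add_ne_zero_of_norm_lt_one hw)), add_re, one_re,
    hexpand]
  linarith

theorem norm_ofReal_mul_lt_one {a : ℝ} {z : ℂ} (ha : |a| ≤ 1) (hz : ‖z‖ < 1) :
    ‖(a : ℂ) * z‖ < 1 := by
  rw [norm_mul, norm_real, Real.norm_eq_abs]
  exact mul_lt_one_of_nonneg_of_lt_one_right ha (norm_nonneg z) hz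

theorem stmt_1 (A B : ℝ) (hB : -1 ≤ B) (hBA : B < A) (hA : A ≤ 1)
    (z : ℂ) (hz : ‖z‖ < 1) :
    0 < ((1 - (A : ℂ) * (B : ℂ) * z ^ 2) / ((1 + (A : ℂ) * z) * (1 + (B : ℂ) * z))).re := by
  have hAz : ‖(A : ℂ) * z‖ < 1 := norm_ofReal_mul_lt_one (abs_le.mpr ⟨by linarith, hA⟩) hz
  have hBz : ‖(B : ℂ) * z‖ < 1 := norm_ofReal_mul_lt_one (abs_le.mpr ⟨hB, by linarith⟩) hz
  rw [show (A : ℂ) * B * z ^ 2 = (A * z) * (B * z) by ring,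
    one_sub_mul_div_eq_inv_add_inv_sub_one (one_add_ne_zero_of_norm_lt_one hAz)
      (one_add_ne_zero_of_norm_lt_one hBz), sub_re, add_re, one_re]
  linarith [one_half_lt_re_inv_one_add hAz, one_half_lt_re_inv_one_add hBz]
end

section
/- For every complex number z with |z| < 1, Re(1 - z/(2(1+z))) ≥ 3/4. In particular the function Q(z) = β z/(2√(1+z)) with β > 0 satisfies Re(z Q'(z)/Q(z)) > 0 on the punctured unit disk. -/
open Complex

/-!
Since `1 - z / (2 * (1 + z)) = 1/2 + 1 / (2 * (1 + z))`, the bound reduces to `1/2 < Re (1 / w)`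
on the disc `‖w - 1‖ < 1`, which inversion maps onto the half-plane `Re > 1/2`. The second claim is
the first one, because `z * Q' z / Q z = z * logDeriv Q z = 1 - z / (2 * (1 + z))`.
-/

theorem one_half_lt_re_inv {w : ℂ} (hw : ‖w - 1‖ < 1) : 1 / 2 < w⁻¹.re := by
  have hnormSq : normSq w < 2 * w.re := by
    have := (sq_lt_one_iff₀ (norm_nonneg _)).2 hw
    rw [Complex.sq_norm, normSq_apply] at this
    rw [normSq_apply]
    simp only [sub_re, one_re, sub_im, one_im, sub_zero] at this
    nlinarith
  have hpos : 0 < normSq w := normSq_pos.2 (by rintro rfl; simp at hw)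
  rw [inv_re, lt_div_iff₀ hpos]
  linarith

theorem three_quarters_lt_re_one_sub_div {z : ℂ} (hz : ‖z‖ < 1) :
    3 / 4 < (1 - z / (2 * (1 + z))).re := by
  have hz1 : 1 + z ≠ 0 := slitPlane_ne_zero (mem_slitPlane_of_norm_lt_one hz)
  have hsplit : 1 - z / (2 * (1 + z)) = 1 / 2 + (1 + z)⁻¹ / 2 := by
    field_simp
    ring
  have hinv : 1 / 2 < (1 + z)⁻¹.re := one_half_lt_re_inv (by rwa [add_sub_cancel_left])
  rw [hsplit, add_re, div_ofNat_re, div_ofNat_re, one_re]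
  linarith

theorem logDeriv_cpow_const {f : ℂ → ℂ} {x : ℂ} (c : ℂ) (hf : DifferentiableAt ℂ f x)
    (hx : f x ∈ slitPlane) :
    logDeriv (fun w => f w ^ c) x = c * logDeriv f x := by
  have hx0 : f x ≠ 0 := slitPlane_ne_zero hx
  have hpow0 : f x ^ c ≠ 0 := by simp [cpow_eq_zero_iff, hx0]
  rw [logDeriv_apply, logDeriv_apply, (hf.hasDerivAt.cpow_const hx).deriv,
    cpow_sub _ _ hx0, cpow_one]
  field_simp

theorem logDeriv_const_mul_div_sqrt_one_add {c z : ℂ} (hc : c ≠ 0) (hz : z ≠ 0)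
    (hz' : 1 + z ∈ slitPlane) :
    logDeriv (fun w => c * w / (2 * (1 + w) ^ (1 / 2 : ℂ))) z = 1 / z - 1 / (2 * (1 + z)) := by
  have hdiff : DifferentiableAt ℂ (fun w : ℂ => 1 + w) z := by fun_prop
  have hsqrt0 : (1 + z) ^ (1 / 2 : ℂ) ≠ 0 := by
    simp [cpow_eq_zero_iff, slitPlane_ne_zero hz']
  rw [logDeriv_div (f := fun w => c * w) (g := fun w => 2 * (1 + w) ^ (1 / 2 : ℂ)) z
      (mul_ne_zero hc hz) (mul_ne_zero two_ne_zero hsqrt0) (by fun_prop)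
      ((hdiff.cpow_const hz').const_mul 2),
    logDeriv_const_mul z c hc, logDeriv_const_mul z 2 two_ne_zero, logDeriv_id',
    logDeriv_cpow_const _ hdiff hz', logDeriv_apply, deriv_const_add, deriv_id'']
  rw [one_div (2 * _), mul_inv]
  ring

theorem stmt_2 (z : ℂ) (hz : ‖z‖ < 1) :
    (3 : ℝ) / 4 ≤ (1 - z / (2 * (1 + z))).re ∧
    ∀ β : ℝ, 0 < β → z ≠ 0 →
      0 < (z * deriv (fun w : ℂ => (β : ℂ) * w / (2 * (1 + w) ^ ((1 : ℂ) / 2))) z /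
            ((β : ℂ) * z / (2 * (1 + z) ^ ((1 : ℂ) / 2)))).re := by
  have hre := three_quarters_lt_re_one_sub_div hz
  refine ⟨hre.le, fun β hβ hz0 => ?_⟩
  have hβ0 : (β : ℂ) ≠ 0 := ofReal_ne_zero.2 hβ.ne'
  rw [mul_div_assoc, ← logDeriv_apply,
    logDeriv_const_mul_div_sqrt_one_add hβ0 hz0 (mem_slitPlane_of_norm_lt_one hz),
    mul_sub, mul_one_div_cancel hz0, mul_one_div]
  linarith
end

section
/- Let A, B, β be real numbers with -1 ≤ B < A ≤ 1 and (A - B)β ≥ √2 (1 + |B|)^2 + (1 - B)^2. Then for every real t, |1 + β(A - B) e^{it} / (1 + B e^{it})^2| ≥ √2. -/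
/-!
Put `z = e^{it}` and `c = 2B + β(A - B)`. Clearing the denominator,
`1 + β(A - B) z / (1 + B z)² = (1 + c z + B² z²) / (1 + B z)²`. On the unit circle the
numerator has modulus at least `c - (1 + B²)`, which the hypothesis on `β` makes at least
`√2 (1 + |B|)²`, while the denominator has modulus at most `(1 + |B|)²`.
-/

open Complex

namespace Complex

lemma norm_one_add_mul_le {b z : ℂ} (hz : ‖z‖ = 1) : ‖1 + b * z‖ ≤ 1 + ‖b‖ :=
  calc ‖1 + b * z‖ ≤ ‖(1 : ℂ)‖ + ‖b * z‖ := norm_add_le _ _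
    _ = 1 + ‖b‖ := by rw [norm_one, norm_mul, hz, mul_one]

lemma norm_sub_le_norm_one_add_mul_add_mul_sq {a q z : ℂ} (hz : ‖z‖ = 1) :
    ‖a‖ - (1 + ‖q‖) ≤ ‖1 + a * z + q * z ^ 2‖ := by
  have hq : ‖1 + q * z ^ 2‖ ≤ 1 + ‖q‖ := norm_one_add_mul_le (by rw [norm_pow, hz, one_pow])
  have ha : ‖a‖ ≤ ‖1 + a * z + q * z ^ 2‖ + ‖1 + q * z ^ 2‖ :=
    calc ‖a‖ = ‖(1 + a * z + q * z ^ 2) - (1 + q * z ^ 2)‖ := by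
          rw [add_sub_add_right_eq_sub, add_sub_cancel_left, norm_mul, hz, mul_one]
      _ ≤ ‖1 + a * z + q * z ^ 2‖ + ‖1 + q * z ^ 2‖ := norm_sub_le _ _
  linarith

lemma one_add_div_one_add_mul_sq {b w z : ℂ} (hden : 1 + b * z ≠ 0) :
    1 + w * z / (1 + b * z) ^ 2 = (1 + (2 * b + w) * z + b ^ 2 * z ^ 2) / (1 + b * z) ^ 2 := by
  have hden2 : (1 + b * z) ^ 2 ≠ 0 := pow_ne_zero 2 hden
  rw [eq_div_iff hden2, add_mul, div_mul_cancel₀ _ hden2]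
  ring

lemma le_norm_one_add_div_one_add_mul_sq {K : ℝ} (hK : 0 ≤ K) {b w z : ℂ} (hz : ‖z‖ = 1)
    (hden : 1 + b * z ≠ 0) (h : K * (1 + ‖b‖) ^ 2 ≤ ‖2 * b + w‖ - (1 + ‖b ^ 2‖)) :
    K ≤ ‖1 + w * z / (1 + b * z) ^ 2‖ := by
  rw [one_add_div_one_add_mul_sq hden, norm_div, norm_pow, le_div_iff₀ (by positivity)]
  calc K * ‖1 + b * z‖ ^ 2 ≤ K * (1 + ‖b‖) ^ 2 := by
        gcongr
        exact norm_one_add_mul_le hz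
    _ ≤ ‖1 + (2 * b + w) * z + b ^ 2 * z ^ 2‖ :=
        h.trans (norm_sub_le_norm_one_add_mul_add_mul_sq hz)

end Complex

theorem stmt_6_general (A B β : ℝ)
    (hβ : Real.sqrt 2 * (1 + |B|) ^ 2 + (1 - B) ^ 2 ≤ (A - B) * β)
    (t : ℝ) (hden : 1 + (B : ℂ) * Complex.exp (t * Complex.I) ≠ 0) :
    Real.sqrt 2 ≤ ‖(1 + (β : ℂ) * ((A : ℂ) - B) * Complex.exp (t * Complex.I) /
      (1 + (B : ℂ) * Complex.exp (t * Complex.I)) ^ 2 : ℂ)‖ := by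
  refine le_norm_one_add_div_one_add_mul_sq (Real.sqrt_nonneg 2)
    (norm_exp_ofReal_mul_I t) hden ?_
  have hreal : 2 * (B : ℂ) + β * (A - B) = ((2 * B + β * (A - B) : ℝ) : ℂ) := by push_cast; ring
  rw [hreal, ← ofReal_pow, norm_real, norm_real, norm_real, Real.norm_eq_abs, Real.norm_eq_abs,
    Real.norm_eq_abs, abs_of_nonneg (sq_nonneg B)]
  linarith [le_abs_self (2 * B + β * (A - B))]

theorem stmt_6 (A B β : ℝ) (hB : -1 ≤ B) (hBA : B < A) (hA : A ≤ 1)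
    (hβ : Real.sqrt 2 * (1 + |B|) ^ 2 + (1 - B) ^ 2 ≤ (A - B) * β)
    (t : ℝ) (hden : 1 + (B : ℂ) * Complex.exp (t * Complex.I) ≠ 0) :
    Real.sqrt 2 ≤ ‖(1 + (β : ℂ) * ((A : ℂ) - B) * Complex.exp (t * Complex.I) /
      (1 + (B : ℂ) * Complex.exp (t * Complex.I)) ^ 2 : ℂ)‖ :=
  stmt_6_general A B β hβ t hden
end

section
/- Let A, B, D, E, β be real numbers with -1 ≤ B < A ≤ 1, -1 ≤ E < D ≤ 1, and |β|(A - B) ≥ (D - E)(1 + |AB|) + |(A + B)(D - E) - Eβ(A - B)|. Then for every real t, |(D - E)(1 + A B e^{2it}) + ((A + B)(D - E) - βE(A - B)) e^{it}| ≤ |β|(A - B). -/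
open Complex

theorem norm_mul_one_add_mul_add_mul_le {a b c z w : ℂ} (hz : ‖z‖ ≤ 1) (hw : ‖w‖ ≤ 1) :
    ‖a * (1 + b * z) + c * w‖ ≤ ‖a‖ * (1 + ‖b‖) + ‖c‖ :=
  calc ‖a * (1 + b * z) + c * w‖ ≤ ‖a‖ * (‖(1 : ℂ)‖ + ‖b‖ * ‖z‖) + ‖c‖ * ‖w‖ := by
        grw [norm_add_le, norm_mul, norm_mul, norm_add_le, norm_mul]
    _ ≤ ‖a‖ * (1 + ‖b‖) + ‖c‖ := by
        grw [hz, hw]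
        simp

theorem stmt_9_general (A B D E β : ℝ) (hED : E < D)
    (hβ : (D - E) * (1 + |A * B|) + |(A + B) * (D - E) - E * β * (A - B)| ≤ |β| * (A - B))
    (t : ℝ) :
    ‖((D : ℂ) - E) * (1 + (A : ℂ) * (B : ℂ) * Complex.exp (2 * t * Complex.I)) +
      (((A + B) * (D - E) - β * E * (A - B) : ℝ) : ℂ) * Complex.exp (t * Complex.I)‖
      ≤ |β| * (A - B) := by
  have hz : ‖exp (2 * t * I)‖ = 1 := by exact_mod_cast norm_exp_ofReal_mul_I (2 * t)
  have hDE : ‖(D : ℂ) - E‖ = D - E := by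
    rw [← ofReal_sub, norm_real, Real.norm_eq_abs, abs_of_pos (sub_pos.2 hED)]
  calc _ ≤ ‖(D : ℂ) - E‖ * (1 + ‖(A : ℂ) * B‖) + ‖(((A + B) * (D - E) - β * E * (A - B) : ℝ) : ℂ)‖ :=
        norm_mul_one_add_mul_add_mul_le hz.le (norm_exp_ofReal_mul_I t).le
    _ = (D - E) * (1 + |A * B|) + |(A + B) * (D - E) - E * β * (A - B)| := by
        rw [hDE, ← ofReal_mul, norm_real, norm_real, Real.norm_eq_abs, Real.norm_eq_abs]
        ring_nf
    _ ≤ |β| * (A - B) := hβ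

theorem stmt_9 (A B D E β : ℝ) (hB : -1 ≤ B) (hBA : B < A) (hA : A ≤ 1)
    (hE : -1 ≤ E) (hED : E < D) (hD : D ≤ 1)
    (hβ : (D - E) * (1 + |A * B|) + |(A + B) * (D - E) - E * β * (A - B)| ≤ |β| * (A - B))
    (t : ℝ) :
    ‖((D : ℂ) - E) * (1 + (A : ℂ) * (B : ℂ) * Complex.exp (2 * t * Complex.I)) +
      (((A + B) * (D - E) - β * E * (A - B) : ℝ) : ℂ) * Complex.exp (t * Complex.I)‖
      ≤ |β| * (A - B) :=
  stmt_9_general A B D E β hED hβ t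
end

section
/- Let p be analytic on the open unit disk 𝔻 with p(0) = 1 and suppose there is an analytic function w : 𝔻 → 𝔻 with w(0) = 0 (a Schwarz function) such that p(z) + β z p'(z) = √(1 + w(z)) for all z ∈ 𝔻, where β > 0. Then there exists a Schwarz function w₁ with p(z) = √(1 + w₁(z)) for all z ∈ 𝔻; equivalently |p(z)^2 - 1| < 1 for all z ∈ 𝔻. -/
/-!
Put `q = p + β z p'`. The function `u ↦ u p(u ^ β z)` has derivative `q(u ^ β z)` on `(0, 1)`, so
`p(z) = ∫₀¹ q(u ^ β z) du` is an average of values of `q`. These lie in the closed right loop of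
the lemniscate, `{v | 0 ≤ Re v, |v² - 1| ≤ 1}`, which is closed and convex, hence so does `p(z)`.
The maximum modulus principle for `p² - 1`, which vanishes at `0`, makes `|p² - 1| < 1` strict;
this forces `Re p > 0`, so `p = √(p²)` and `w₁ = p² - 1` is the required Schwarz function.
-/

open Complex Metric
open MeasureTheory Set

def closedRightLemniscate : Set ℂ := {v | 0 ≤ v.re ∧ ‖v ^ 2 - 1‖ ≤ 1}

theorem mem_closedRightLemniscate_iff {v : ℂ} :
    v ∈ closedRightLemniscate ↔ 0 ≤ v.re ∧ normSq v ^ 2 ≤ 2 * (v ^ 2).re := by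
  have h : normSq (v ^ 2 - 1) = normSq v ^ 2 - 2 * (v ^ 2).re + 1 := by
    simp only [normSq_sub, map_pow, map_one, mul_one]; ring
  rw [closedRightLemniscate, mem_ofPred_eq, ← sq_le_one_iff₀ (norm_nonneg _),
    ← normSq_eq_norm_sq, h]
  constructor <;> rintro ⟨h1, h2⟩ <;> exact ⟨h1, by linarith⟩

theorem normSq_mul_normSq_le_of_mem_closedRightLemniscate {a b : ℂ}
    (ha : a ∈ closedRightLemniscate) (hb : b ∈ closedRightLemniscate) :
    normSq a * normSq b ≤ 2 * (a * b).re := by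
  obtain ⟨ha0, ha⟩ := mem_closedRightLemniscate_iff.1 ha
  obtain ⟨hb0, hb⟩ := mem_closedRightLemniscate_iff.1 hb
  simp only [normSq_apply, sq, mul_re] at ha hb ⊢
  have hya : a.im * a.im ≤ a.re * a.re := by
    nlinarith [mul_self_nonneg (a.re * a.re + a.im * a.im)]
  have hyb : b.im * b.im ≤ b.re * b.re := by
    nlinarith [mul_self_nonneg (b.re * b.re + b.im * b.im)]
  have hre : 0 ≤ a.re * b.re - a.im * b.im := by
    have := abs_le_of_sq_le_sq (a := a.im * b.im) (b := a.re * b.re) (by nlinarith)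
      (mul_nonneg ha0 hb0)
    linarith [le_abs_self (a.im * b.im)]
  refine abs_le_of_sq_le_sq' ?_ (by linarith) |>.2
  -- `(x₁x₂ - y₁y₂)² - (x₁² - y₁²)(x₂² - y₂²) = (x₁y₂ - x₂y₁)²`
  nlinarith [sq_nonneg (a.re * b.im - a.im * b.re), mul_nonneg (normSq_nonneg a) (normSq_nonneg b)]

theorem convex_closedRightLemniscate : Convex ℝ closedRightLemniscate := by
  intro a ha b hb t s ht hs hts
  have hab := normSq_mul_normSq_le_of_mem_closedRightLemniscate ha hb
  obtain ⟨ha0, ha⟩ := mem_closedRightLemniscate_iff.1 ha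
  obtain ⟨hb0, hb⟩ := mem_closedRightLemniscate_iff.1 hb
  rw [mem_closedRightLemniscate_iff]
  have hconv : normSq (t • a + s • b) ≤ t * normSq a + s * normSq b := by
    simp only [normSq_apply, add_re, add_im, real_smul, re_ofReal_mul, im_ofReal_mul]
    nlinarith [sq_nonneg (a.re - b.re), sq_nonneg (a.im - b.im), mul_nonneg ht hs]
  have hsq : (t • a + s • b) ^ 2
      = (t ^ 2 : ℝ) • a ^ 2 + (s ^ 2 : ℝ) • b ^ 2 + (2 * t * s : ℝ) • (a * b) := by
    simp only [real_smul]; push_cast; ring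
  refine ⟨?_, ?_⟩
  · simp only [add_re, real_smul, re_ofReal_mul]; positivity
  calc normSq (t • a + s • b) ^ 2 ≤ (t * normSq a + s * normSq b) ^ 2 := by
        gcongr; exact normSq_nonneg _
    _ = t ^ 2 * normSq a ^ 2 + s ^ 2 * normSq b ^ 2 + 2 * t * s * (normSq a * normSq b) := by
        ring
    _ ≤ t ^ 2 * (2 * (a ^ 2).re) + s ^ 2 * (2 * (b ^ 2).re) + 2 * t * s * (2 * (a * b).re) := by
        gcongr
    _ = 2 * ((t • a + s • b) ^ 2).re := by
      rw [hsq]; simp only [add_re, smul_re, smul_eq_mul]; ring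

theorem isClosed_closedRightLemniscate : IsClosed closedRightLemniscate :=
  (isClosed_le continuous_const continuous_re).inter
    (isClosed_le (continuous_norm.comp ((continuous_pow 2).sub continuous_const)) continuous_const)

theorem cpow_one_div_two_mem_closedRightLemniscate {u : ℂ} (hu : ‖u - 1‖ ≤ 1) :
    u ^ (1 / 2 : ℂ) ∈ closedRightLemniscate := by
  rw [one_div]
  refine ⟨?_, ?_⟩
  · rw [cpow_inv_two_re]; positivity
  · rwa [cpow_ofNat_inv_pow u 2]

theorem Convex.smul_intervalIntegral_mem {E : Type*} [NormedAddCommGroup E] [NormedSpace ℝ E]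
    [CompleteSpace E] {C : Set E} (hC : Convex ℝ C) (hCc : IsClosed C) {f : ℝ → E} {a b : ℝ}
    (hab : a < b) (hf : IntervalIntegrable f volume a b) (hfC : ∀ u ∈ Ioc a b, f u ∈ C) :
    (b - a)⁻¹ • ∫ u in a..b, f u ∈ C := by
  rw [← interval_average_eq, uIoc_of_le hab.le]
  refine hC.set_average_mem hCc ?_ ?_ ((ae_restrict_iff' measurableSet_Ioc).2 (ae_of_all _ hfC))
    hf.1
  · simpa using hab
  · simp

section BriotBouquet

variable {p : ℂ → ℂ} {β r : ℝ}

theorem mapsTo_ofReal_rpow_mul_ball (hβ : 0 < β) {z : ℂ} (hz : z ∈ ball 0 r) :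
    MapsTo (fun u : ℝ ↦ ((u ^ β : ℝ) : ℂ) * z) (Icc 0 1) (ball 0 r) := by
  intro u ⟨hu0, hu1⟩
  rw [mem_ball_zero_iff] at hz ⊢
  rw [norm_mul, norm_real, Real.norm_of_nonneg (Real.rpow_nonneg hu0 β)]
  calc u ^ β * ‖z‖ ≤ 1 * ‖z‖ := by gcongr; exact Real.rpow_le_one hu0 hu1 hβ.le
    _ < r := by rwa [one_mul]

theorem continuousOn_add_mul_deriv_comp_ofReal_rpow_mul (hβ : 0 < β)
    (hp : DifferentiableOn ℂ p (ball 0 r)) {z : ℂ} (hz : z ∈ ball 0 r) :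
    ContinuousOn (fun u : ℝ ↦ (fun ζ ↦ p ζ + β * ζ * deriv p ζ) (((u ^ β : ℝ) : ℂ) * z))
      (Icc 0 1) :=
  (hp.continuousOn.add ((continuousOn_const.mul continuousOn_id).mul
    (hp.deriv isOpen_ball).continuousOn)).comp
    ((continuous_ofReal.comp (Real.continuous_rpow_const hβ.le)).mul continuous_const).continuousOn
    (mapsTo_ofReal_rpow_mul_ball hβ hz)

theorem integral_add_mul_deriv_comp_rpow_mul (hβ : 0 < β) (hp : DifferentiableOn ℂ p (ball 0 r))
    {z : ℂ} (hz : z ∈ ball 0 r) :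
    ∫ u in (0 : ℝ)..1, (fun ζ ↦ p ζ + β * ζ * deriv p ζ) (((u ^ β : ℝ) : ℂ) * z) = p z := by
  set γ : ℝ → ℂ := fun u ↦ ((u ^ β : ℝ) : ℂ) * z
  have hγ := mapsTo_ofReal_rpow_mul_ball hβ hz
  have hγc : Continuous γ :=
    (continuous_ofReal.comp (Real.continuous_rpow_const hβ.le)).mul continuous_const
  have hderiv : ∀ u ∈ Ioo (0 : ℝ) 1,
      HasDerivAt (fun u : ℝ ↦ (u : ℂ) * p (γ u)) (p (γ u) + β * γ u * deriv p (γ u)) u := by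
    intro u ⟨hu0, hu1⟩
    have hp' : HasDerivAt p (deriv p (γ u)) (γ u) :=
      hp.hasDerivAt (isOpen_ball.mem_nhds (hγ ⟨hu0.le, hu1.le⟩))
    have hγ' : HasDerivAt γ (((β * u ^ (β - 1) : ℝ) : ℂ) * z) u :=
      ((Real.hasDerivAt_rpow_const (Or.inl hu0.ne')).ofReal_comp).mul_const z
    have hpow : (u : ℂ) * ((u ^ (β - 1) : ℝ) : ℂ) = ((u ^ β : ℝ) : ℂ) := by
      rw [Real.rpow_sub_one hu0.ne', ofReal_div, mul_div_cancel₀ _ (ofReal_ne_zero.2 hu0.ne')]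
    refine ((hasDerivAt_id u).ofReal_comp.mul (hp'.comp u hγ')).congr_deriv ?_
    simp only [γ, Function.comp_apply, id, ofReal_one, one_mul, ofReal_mul]
    linear_combination (β : ℂ) * z * deriv p (γ u) * hpow
  rw [intervalIntegral.integral_eq_sub_of_hasDerivAt_of_le zero_le_one
    (continuous_ofReal.continuousOn.mul (hp.continuousOn.comp hγc.continuousOn hγ)) hderiv
    ((continuousOn_add_mul_deriv_comp_ofReal_rpow_mul hβ hp hz).intervalIntegrable_of_Icc
      zero_le_one)]
  simp [γ]

theorem mem_of_add_mul_deriv_mem {C : Set ℂ} (hC : Convex ℝ C) (hCc : IsClosed C) (hβ : 0 < β)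
    (hp : DifferentiableOn ℂ p (ball 0 r))
    (hpC : ∀ z ∈ ball 0 r, p z + β * z * deriv p z ∈ C) {z : ℂ} (hz : z ∈ ball 0 r) :
    p z ∈ C := by
  have := hC.smul_intervalIntegral_mem hCc zero_lt_one
    ((continuousOn_add_mul_deriv_comp_ofReal_rpow_mul hβ hp hz).intervalIntegrable_of_Icc
      zero_le_one)
    fun u hu ↦ hpC _ (mapsTo_ofReal_rpow_mul_ball hβ hz (Ioc_subset_Icc_self hu))
  rwa [sub_zero, inv_one, one_smul, integral_add_mul_deriv_comp_rpow_mul hβ hp hz] at this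

end BriotBouquet

theorem Complex.norm_lt_of_forall_norm_le {E F : Type*} [NormedAddCommGroup E] [NormedSpace ℂ E]
    [NormedAddCommGroup F] [NormedSpace ℂ F] {f : E → F} {U : Set E} {M : ℝ}
    (hc : IsPreconnected U) (ho : IsOpen U) (hd : DifferentiableOn ℂ f U)
    (hle : ∀ z ∈ U, ‖f z‖ ≤ M) {c : E} (hcU : c ∈ U) (hlt : ‖f c‖ < M) {z : E} (hz : z ∈ U) :
    ‖f z‖ < M := by
  refine (hle z hz).lt_of_ne fun hzM ↦ hlt.ne ?_
  have hmax : IsMaxOn (norm ∘ f) U z := fun x hx ↦ (hle x hx).trans hzM.ge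
  exact (norm_eqOn_of_isPreconnected_of_isMaxOn hc ho hd hz hmax hcU).trans hzM

theorem re_pos_of_norm_sq_sub_one_lt {v : ℂ} (h0 : 0 ≤ v.re) (h : ‖v ^ 2 - 1‖ < 1) :
    0 < v.re := by
  refine h0.lt_of_ne fun hre ↦ h.not_ge ?_
  have hv : v ^ 2 - 1 = -((v.im ^ 2 + 1 : ℝ) : ℂ) := by
    apply Complex.ext <;> simp [sq, ← hre]; ring
  rw [hv, norm_neg, norm_real, Real.norm_of_nonneg (by positivity)]
  nlinarith [sq_nonneg v.im]

theorem stmt_12_general (p : ℂ → ℂ) (β : ℝ) (hβ : 0 < β)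
    (hp : DifferentiableOn ℂ p (ball (0 : ℂ) 1)) (hp0 : p 0 = 1)
    (w : ℂ → ℂ)
    (hwmap : ∀ z ∈ ball (0 : ℂ) 1, w z ∈ ball (0 : ℂ) 1)
    (heq : ∀ z ∈ ball (0 : ℂ) 1,
      p z + (β : ℂ) * z * deriv p z = (1 + w z) ^ ((1 : ℂ) / 2)) :
    (∃ w₁ : ℂ → ℂ, DifferentiableOn ℂ w₁ (ball (0 : ℂ) 1) ∧ w₁ 0 = 0 ∧
        (∀ z ∈ ball (0 : ℂ) 1, w₁ z ∈ ball (0 : ℂ) 1) ∧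
        ∀ z ∈ ball (0 : ℂ) 1, p z = (1 + w₁ z) ^ ((1 : ℂ) / 2)) ∧
    ∀ z ∈ ball (0 : ℂ) 1, ‖(p z) ^ 2 - 1‖ < 1 := by
  have hmem : ∀ z ∈ ball (0 : ℂ) 1, p z ∈ closedRightLemniscate :=
    fun z ↦ mem_of_add_mul_deriv_mem convex_closedRightLemniscate isClosed_closedRightLemniscate
      hβ hp fun ζ hζ ↦ heq ζ hζ ▸ cpow_one_div_two_mem_closedRightLemniscate
        (by simpa using (mem_ball_zero_iff.1 (hwmap ζ hζ)).le)
  have hw₁ : DifferentiableOn ℂ (fun z ↦ p z ^ 2 - 1) (ball 0 1) := (hp.pow 2).sub_const 1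
  have hlt : ∀ z ∈ ball (0 : ℂ) 1, ‖p z ^ 2 - 1‖ < 1 :=
    fun z ↦ Complex.norm_lt_of_forall_norm_le (convex_ball 0 1).isPreconnected isOpen_ball hw₁
      (fun ζ hζ ↦ (hmem ζ hζ).2) (mem_ball_self one_pos) (by simp [hp0])
  refine ⟨⟨fun z ↦ p z ^ 2 - 1, hw₁, by simp [hp0], fun z hz ↦ mem_ball_zero_iff.2 (hlt z hz),
    fun z hz ↦ ?_⟩, hlt⟩
  rw [add_sub_cancel, one_div,
    sq_cpow_two_inv (re_pos_of_norm_sq_sub_one_lt (hmem z hz).1 (hlt z hz))]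

theorem stmt_12 (p : ℂ → ℂ) (β : ℝ) (hβ : 0 < β)
    (hp : DifferentiableOn ℂ p (ball (0 : ℂ) 1)) (hp0 : p 0 = 1)
    (w : ℂ → ℂ) (hw : DifferentiableOn ℂ w (ball (0 : ℂ) 1)) (hw0 : w 0 = 0)
    (hwmap : ∀ z ∈ ball (0 : ℂ) 1, w z ∈ ball (0 : ℂ) 1)
    (heq : ∀ z ∈ ball (0 : ℂ) 1,
      p z + (β : ℂ) * z * deriv p z = (1 + w z) ^ ((1 : ℂ) / 2)) :
    (∃ w₁ : ℂ → ℂ, DifferentiableOn ℂ w₁ (ball (0 : ℂ) 1) ∧ w₁ 0 = 0 ∧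
        (∀ z ∈ ball (0 : ℂ) 1, w₁ z ∈ ball (0 : ℂ) 1) ∧
        ∀ z ∈ ball (0 : ℂ) 1, p z = (1 + w₁ z) ^ ((1 : ℂ) / 2)) ∧
    ∀ z ∈ ball (0 : ℂ) 1, ‖(p z) ^ 2 - 1‖ < 1 :=
  stmt_12_general p β hβ hp hp0 w hwmap heq
end
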